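/- arXiv:2307.11440 — 2 statements merged into one kernel-verified Lean document; each statement's English description precedes it below -/
import Mathlib

section
/- Let p be a prime with p ≡ 1 (mod 4). Then the fundamental unit of ℚ(√p) has norm −1; equivalently, the equation x² − p y² = −4 (or −1 in appropriate integers of ℚ(√p)) has a solution, so there exists a unit of norm −1 in the ring of integers of ℚ(√p). -/
open NumberField

/-!
Legendre's argument. Let `(x, y)` be the fundamental solution of `x ^ 2 - p * y ^ 2 = 1`. Reducing
mod 4 shows that `y` is even and `x` odd, so `x = 2 * u + 1`, `y = 2 * z` with
`u * (u + 1) = p * z ^ 2`. As `u` and `u + 1` are coprime, one of them is a square and the other is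
`p` times a square. If `u + 1 = a ^ 2` and `u = p * b ^ 2`, then `(|a|, b)` is a smaller nontrivial
solution of the Pell equation; hence `u = a ^ 2`, `u + 1 = p * b ^ 2` and `a ^ 2 - p * b ^ 2 = -1`.

Then `a + b * α` is a unit of `𝓞 K` with inverse `b * α - a`, and computing its norm in the basis
`1, α` of `K` gives `a ^ 2 - p * b ^ 2 = -1`.
-/

theorem Int.sq_emod_four_eq_zero_or_one (x : ℤ) : x ^ 2 % 4 = 0 ∨ x ^ 2 % 4 = 1 := by
  rcases Int.even_or_odd x with ⟨k, rfl⟩ | hx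
  · left
    rw [show (k + k) ^ 2 = 4 * k ^ 2 by ring]
    simp
  · exact Or.inr (Int.sq_mod_four_eq_one_of_odd hx)

theorem Int.exists_sq_of_isCoprime_of_mul_eq_sq {a b c : ℤ} (hab : IsCoprime a b) (ha : 0 ≤ a)
    (h : a * b = c ^ 2) : ∃ s, a = s ^ 2 := by
  obtain ⟨s, hs | hs⟩ := Int.sq_of_isCoprime hab h
  · exact ⟨s, hs⟩
  · exact ⟨0, by nlinarith [sq_nonneg s]⟩

theorem Int.exists_sq_of_isCoprime_of_mul_eq_mul_sq {p m n z : ℤ} (hp0 : 0 < p) (hm : 0 ≤ m)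
    (hn : 0 ≤ n) (hmn : IsCoprime m n) (h : m * n = p * z ^ 2) (hpm : p ∣ m) :
    ∃ a b, m = p * b ^ 2 ∧ n = a ^ 2 := by
  obtain ⟨c, rfl⟩ := hpm
  have hc : 0 ≤ c := nonneg_of_mul_nonneg_right hm hp0
  have hcn : c * n = z ^ 2 := mul_left_cancel₀ hp0.ne' (by rw [← h, mul_assoc])
  have hcop : IsCoprime c n := hmn.of_mul_left_right
  obtain ⟨b, rfl⟩ := Int.exists_sq_of_isCoprime_of_mul_eq_sq hcop hc hcn
  obtain ⟨a, rfl⟩ := Int.exists_sq_of_isCoprime_of_mul_eq_sq hcop.symm hn (by rw [mul_comm, hcn])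
  exact ⟨a, b, rfl, rfl⟩

theorem Int.exists_sq_of_mul_add_one_eq_prime_mul_sq {p u z : ℤ} (hp : Prime p) (hp0 : 0 < p)
    (hu : 0 ≤ u) (h : u * (u + 1) = p * z ^ 2) :
    ∃ a b, (u = p * b ^ 2 ∧ u + 1 = a ^ 2) ∨ (u = a ^ 2 ∧ u + 1 = p * b ^ 2) := by
  have hcop : IsCoprime u (u + 1) := ⟨-1, 1, by ring⟩
  rcases hp.dvd_mul.mp ⟨z ^ 2, h⟩ with hpu | hpu
  · obtain ⟨a, b, hb, ha⟩ :=
      exists_sq_of_isCoprime_of_mul_eq_mul_sq hp0 hu (by omega) hcop h hpu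
    exact ⟨a, b, Or.inl ⟨hb, ha⟩⟩
  · obtain ⟨a, b, hb, ha⟩ := exists_sq_of_isCoprime_of_mul_eq_mul_sq hp0 (by omega) hu
      hcop.symm (by rw [mul_comm, h]) hpu
    exact ⟨a, b, Or.inr ⟨ha, hb⟩⟩

namespace Pell.Solution₁

variable {d : ℤ}

theorem even_y_of_emod_four_eq_one (hd : d % 4 = 1) (a : Solution₁ d) : Even a.y := by
  by_contra hy
  have hy2 : (d * a.y ^ 2) % 4 = 1 := by
    rw [Int.mul_emod, hd, Int.sq_mod_four_eq_one_of_odd (Int.not_even_iff_odd.mp hy)]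
    rfl
  have hxy := a.prop
  have hx2 := Int.sq_emod_four_eq_zero_or_one a.x
  omega

theorem odd_x_of_even_y (a : Solution₁ d) (hy : Even a.y) : Odd a.x := by
  obtain ⟨k, hk⟩ := hy
  rw [← Int.odd_pow' two_ne_zero, a.prop_x, hk]
  exact ⟨2 * d * k ^ 2, by ring⟩

end Pell.Solution₁

theorem Int.exists_sq_sub_prime_mul_sq_eq_neg_one {p : ℕ} (hp : p.Prime) (h4 : p % 4 = 1) :
    ∃ a b : ℤ, a ^ 2 - p * b ^ 2 = -1 := by
  have hpZ : Prime (p : ℤ) := Nat.prime_iff_prime_int.mp hp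
  have hp0 : (0 : ℤ) < p := mod_cast hp.pos
  obtain ⟨ε, hε⟩ := Pell.IsFundamental.exists_of_not_isSquare hp0 hpZ.not_isSquare
  obtain ⟨z, hz⟩ := ε.even_y_of_emod_four_eq_one (by omega)
  obtain ⟨u, hu⟩ := ε.odd_x_of_even_y ⟨z, hz⟩
  have hfac : u * (u + 1) = p * z ^ 2 := by
    have hxy := ε.prop
    rw [hu, hz] at hxy
    linarith
  obtain ⟨a, b, ⟨hb, ha⟩ | ⟨ha, hb⟩⟩ :=
    Int.exists_sq_of_mul_add_one_eq_prime_mul_sq hpZ hp0 (by linarith [hε.1]) hfac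
  · have hsq : 1 < |a| := by
      rw [← one_lt_sq_iff_one_lt_abs, ← ha]
      linarith [hε.1]
    have hmin := hε.x_le_x (a := .mk |a| b (by rw [sq_abs]; linear_combination hb - ha))
      (by rwa [Pell.Solution₁.x_mk])
    rw [Pell.Solution₁.x_mk] at hmin
    -- `(|a|, b)` solves the Pell equation with `|a| ≤ a ^ 2 = u + 1 < 2 * u + 1 = ε.x`.
    nlinarith [sq_abs a, hε.1]
  · exact ⟨a, b, by linear_combination hb - ha⟩

section QuadraticNorm

variable {F K : Type*} [Field F] [Field K] [Algebra F K] {d : F} {α : K}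

theorem linearIndependent_one_of_sq_eq_algebraMap (hα : α ^ 2 = algebraMap F K d)
    (hd : ¬IsSquare d) : LinearIndependent F ![1, α] := by
  rw [LinearIndependent.pair_symm_iff, linearIndependent_fin2]
  refine ⟨by simp, fun c hc => hd ⟨c, ?_⟩⟩
  simp only [Matrix.cons_val_one, Matrix.cons_val_zero, Algebra.smul_def, mul_one] at hc
  apply (algebraMap F K).injective
  rw [← hα, ← hc, map_mul]
  ring

theorem Algebra.leftMulMatrix_algebraMap_add_mul_sqrt (hα : α ^ 2 = algebraMap F K d)
    (B : Module.Basis (Fin 2) F K) (hB : ⇑B = ![1, α]) (q r : F) :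
    Algebra.leftMulMatrix B (algebraMap F K q + algebraMap F K r * α) = !![q, d * r; r, q] := by
  have hrepr (s t : F) : ⇑(B.repr (algebraMap F K s + algebraMap F K t * α)) = ![s, t] := by
    rw [← B.equivFun_apply, ← B.equivFun.apply_symm_apply ![s, t], B.equivFun_symm_apply,
      Fin.sum_univ_two, hB]
    simp [Algebra.smul_def]
  have h0 : (algebraMap F K q + algebraMap F K r * α) * B 0 =
      algebraMap F K q + algebraMap F K r * α := by
    simp [hB]
  have h1 : (algebraMap F K q + algebraMap F K r * α) * B 1 =
      algebraMap F K (d * r) + algebraMap F K q * α := by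
    simp only [hB, Matrix.cons_val_one, Matrix.cons_val_zero, map_mul, ← hα]
    ring
  ext i j
  rw [Algebra.leftMulMatrix_eq_repr_mul]
  fin_cases j
  · rw [Fin.zero_eta, h0, hrepr]
    fin_cases i <;> rfl
  · rw [Fin.mk_one, h1, hrepr]
    fin_cases i <;> rfl

theorem Algebra.norm_algebraMap_add_mul_sqrt (hα : α ^ 2 = algebraMap F K d) (hd : ¬IsSquare d)
    (hdim : Module.finrank F K = 2) (q r : F) :
    Algebra.norm F (algebraMap F K q + algebraMap F K r * α) = q ^ 2 - d * r ^ 2 := by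
  let B := basisOfLinearIndependentOfCardEqFinrank
    (linearIndependent_one_of_sq_eq_algebraMap hα hd) (by simp [hdim])
  rw [Algebra.norm_eq_matrix_det B, Algebra.leftMulMatrix_algebraMap_add_mul_sqrt hα B
    (coe_basisOfLinearIndependentOfCardEqFinrank _ _), Matrix.det_fin_two_of]
  ring

end QuadraticNorm

theorem isUnit_add_mul_of_sq_sub_mul_sq_eq_neg_one {R : Type*} [CommRing R] {d a b : ℤ} {α : R}
    (hα : α ^ 2 = d) (h : a ^ 2 - d * b ^ 2 = -1) : IsUnit ((a : R) + b * α) :=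
  .of_mul_eq_one (b * α - a) <| by
    have h' : (a : R) ^ 2 - d * b ^ 2 = -1 := by simpa using congrArg (Int.cast : ℤ → R) h
    linear_combination (b : R) ^ 2 * hα - h'

/-- Let `p` be a prime with `p ≡ 1 (mod 4)` and `K = ℚ(√p)`. Then there exists
a unit of the ring of integers of `K` of norm `−1` (the fundamental unit has
norm `−1`). -/
theorem stmt_7 (p : ℕ) (hp : p.Prime) (h4 : p % 4 = 1)
    (K : Type) [Field K] [Algebra ℚ K] (α : K) (hα : α ^ 2 = (p : K))
    (hdim : Module.finrank ℚ K = 2) :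
    ∃ ε : (𝓞 K)ˣ, Algebra.norm ℚ ((ε : 𝓞 K) : K) = -1 := by
  obtain ⟨a, b, hab⟩ := Int.exists_sq_sub_prime_mul_sq_eq_neg_one hp h4
  let αO : 𝓞 K := ⟨α, .of_pow two_pos (by rw [hα]; exact isIntegral_natCast p)⟩
  have hαO : algebraMap (𝓞 K) K αO = α := rfl
  obtain ⟨ε, hε⟩ := isUnit_add_mul_of_sq_sub_mul_sq_eq_neg_one (α := αO) (d := p)
    (by ext; simpa [hαO] using hα) hab
  have hnorm := Algebra.norm_algebraMap_add_mul_sqrt (hα.trans (map_natCast _ p).symm)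
    (by rw [Rat.isSquare_natCast_iff]; exact hp.prime.not_isSquare) hdim a b
  refine ⟨ε, ?_⟩
  simp only [hε, map_add, map_mul, map_intCast, hαO] at hnorm ⊢
  rw [hnorm]
  exact_mod_cast hab
end

section
/- Let N : I → J, P ≤ I, Q ≤ J with N(P) ⊆ Q as above, and assume all relevant quotients are finite. Let c : Q/N(P) → J/N(I) be the natural map. Then q(c) = |coker c|/|ker c| = q(N'') · [I^{(1)} : P^{(1)}], where I^{(1)} = ker N, P^{(1)} = P ∩ I^{(1)}, and N'' : I/P → J/Q is the induced map. -/
/-! Both cokernels are `J ⧸ (Q ⊔ N(I))`. With `R = N⁻¹(Q)`, the kernel of `N''` is `R ⧸ P` and the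
kernel of `c` is `N(R) ⧸ N(P) ≅ R ⧸ (P ⊔ ker N)`, so `|ker N''| = |ker c| · [P ⊔ ker N : P]`, and
`[P ⊔ ker N : P] = [ker N : P ∩ ker N]` by the second isomorphism theorem. -/

namespace QuotientGroup

variable {G G' : Type*} [Group G] [Group G'] {H : Subgroup G} [H.Normal]
  {f : G ⧸ H →* G'} {φ : G →* G'}

theorem range_eq_of_map_mk_eq (hf : ∀ a : G, f a = φ a) : f.range = φ.range := by
  rw [show φ = f.comp (mk' H) from MonoidHom.ext fun a => (hf a).symm, MonoidHom.range_comp,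
    range_mk', ← MonoidHom.range_eq_map]

theorem card_ker_eq_relIndex_of_map_mk_eq (hf : ∀ a : G, f a = φ a) :
    Nat.card f.ker = H.relIndex φ.ker := by
  have hker : φ.ker.map (mk' H) = f.ker := by
    rw [show φ = f.comp (mk' H) from MonoidHom.ext fun a => (hf a).symm, ← MonoidHom.comap_ker,
      Subgroup.map_comap_eq_self_of_surjective (mk'_surjective H)]
  rw [← hker, ← Subgroup.relIndex_ker, ker_mk']

end QuotientGroup

namespace Subgroup

variable {G G' : Type*} [Group G] [Group G']

theorem index_map_mk' (M K : Subgroup G) [M.Normal] :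
    (K.map (QuotientGroup.mk' M)).index = (K ⊔ M).index := by
  rw [index_map, QuotientGroup.ker_mk', QuotientGroup.range_mk', index_top, mul_one]

theorem relIndex_subgroupOf_eq_relIndex_inf (A B L : Subgroup G) :
    (A.subgroupOf L).relIndex (B.subgroupOf L) = A.relIndex (B ⊓ L) := by
  rw [← inf_subgroupOf_right B L, relIndex_subgroupOf inf_le_right]

theorem relIndex_map_subgroupOf_range (N : G →* G') (P : Subgroup G) (Q : Subgroup G') :
    ((P.map N).subgroupOf Q).relIndex (N.range.subgroupOf Q) =
      (P ⊔ N.ker).relIndex (Q.comap N) := by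
  rw [relIndex_subgroupOf_eq_relIndex_inf, ← map_comap_eq, relIndex_map_map,
    sup_of_le_left (N.ker_le_comap Q)]

theorem relIndex_eq_relIndex_mul_relIndex_sup {P K R : Subgroup G} [P.Normal]
    (hPR : P ≤ R) (hKR : K ≤ R) : P.relIndex R = P.relIndex K * (P ⊔ K).relIndex R := by
  rw [← relIndex_mul_relIndex P (P ⊔ K) R le_sup_left (sup_le hPR hKR), relIndex_sup_left]

end Subgroup

theorem stmt_16_general {I J : Type*} [CommGroup I] [CommGroup J]
    (N : I →* J) (P : Subgroup I) (Q : Subgroup J)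
    (hPQ : ∀ x ∈ P, N x ∈ Q)
    (N'' : (I ⧸ P) →* (J ⧸ Q))
    (hN'' : ∀ a : I, N'' (QuotientGroup.mk a) = QuotientGroup.mk (N a))
    (c : (↥Q ⧸ (P.map N).subgroupOf Q) →* (J ⧸ N.range))
    (hc : ∀ u : ↥Q, c (QuotientGroup.mk u) = QuotientGroup.mk (u : J))
    (h5 : P.relIndex N.ker ≠ 0) :
    (Nat.card ((J ⧸ N.range) ⧸ c.range) : ℚ) / Nat.card c.ker =
      ((Nat.card ((J ⧸ Q) ⧸ N''.range) : ℚ) / Nat.card N''.ker) *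
        (P.relIndex N.ker : ℚ) := by
  have hcoker : Nat.card ((J ⧸ N.range) ⧸ c.range) = Nat.card ((J ⧸ Q) ⧸ N''.range) := by
    change c.range.index = N''.range.index
    rw [QuotientGroup.range_eq_of_map_mk_eq (φ := (QuotientGroup.mk' N.range).comp Q.subtype) hc,
      QuotientGroup.range_eq_of_map_mk_eq (φ := (QuotientGroup.mk' Q).comp N) hN'',
      MonoidHom.range_comp, MonoidHom.range_comp, Q.range_subtype,
      Subgroup.index_map_mk', Subgroup.index_map_mk', sup_comm]
  have hker : Nat.card N''.ker = Nat.card c.ker * P.relIndex N.ker := by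
    rw [QuotientGroup.card_ker_eq_relIndex_of_map_mk_eq (φ := (QuotientGroup.mk' Q).comp N) hN'',
      QuotientGroup.card_ker_eq_relIndex_of_map_mk_eq
        (φ := (QuotientGroup.mk' N.range).comp Q.subtype) hc,
      ← MonoidHom.comap_ker, ← MonoidHom.comap_ker, QuotientGroup.ker_mk', QuotientGroup.ker_mk',
      ← Subgroup.subgroupOf, Subgroup.relIndex_map_subgroupOf_range, mul_comm]
    exact Subgroup.relIndex_eq_relIndex_mul_relIndex_sup hPQ (N.ker_le_comap Q)
  rw [hcoker, hker, Nat.cast_mul, ← div_div, div_mul_cancel₀ _ (Nat.cast_ne_zero.2 h5)]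

/-- With `N : I → J`, `P ≤ I`, `Q ≤ J`, `N(P) ⊆ Q`, let
`c : Q/N(P) → J/N(I)` be the natural map and `N'' : I/P → J/Q` the induced
map. Assuming finiteness of the relevant kernels, cokernels and the index
`[I⁽¹⁾ : P⁽¹⁾]` (where `I⁽¹⁾ = ker N` and `P⁽¹⁾ = P ∩ ker N`), one has
`q(c) = q(N'') · [I⁽¹⁾ : P⁽¹⁾]`, where `q(f) = |coker f|/|ker f|`. -/
theorem stmt_16 {I J : Type*} [CommGroup I] [CommGroup J]
    (N : I →* J) (P : Subgroup I) (Q : Subgroup J)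
    (hPQ : ∀ x ∈ P, N x ∈ Q)
    (N'' : (I ⧸ P) →* (J ⧸ Q))
    (hN'' : ∀ a : I, N'' (QuotientGroup.mk a) = QuotientGroup.mk (N a))
    (c : (↥Q ⧸ (P.map N).subgroupOf Q) →* (J ⧸ N.range))
    (hc : ∀ u : ↥Q, c (QuotientGroup.mk u) = QuotientGroup.mk (u : J))
    (h1 : Finite c.ker) (h2 : Finite ((J ⧸ N.range) ⧸ c.range))
    (h3 : Finite N''.ker) (h4 : Finite ((J ⧸ Q) ⧸ N''.range))
    (h5 : P.relIndex N.ker ≠ 0) :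
    (Nat.card ((J ⧸ N.range) ⧸ c.range) : ℚ) / Nat.card c.ker =
      ((Nat.card ((J ⧸ Q) ⧸ N''.range) : ℚ) / Nat.card N''.ker) *
        (P.relIndex N.ker : ℚ) :=
  stmt_16_general N P Q hPQ N'' hN'' c hc h5
end
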